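/- arXiv:2103.01879 — 6 statements merged into one kernel-verified Lean document; each statement's English description precedes it below -/
import Mathlib

section
/- For every real number z with 0 ≤ z < 1, setting t = z/(1+z) (so 0 ≤ t < 1/2), the series ∑_{n=0}^∞ (binom(2n,n))⁻¹ · H_n · (-1)^n · 4^n · z^n converges and equals (1-t)·[ √t · log((1-√t)/(1+√t)) · (1 + (1/4)·log((1-t)/4)) − (√t/2)·( Li₂((1+√t)/2) − Li₂((1-√t)/2) ) ]. -/
/-!
Since `(2n+1) ∫₀¹ (1-u²)ⁿ du = 4ⁿ / binom(2n,n)`, the series equals `∫₀¹ F(-z(1-u²)) du`, where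
`F(w) = ∑ (2n+1) Hₙ wⁿ = (2w - (1+w) log(1-w)) / (1-w)²` is read off the Cauchy product of
`-log(1-w) = ∑ wᵏ/k` with `∑ (2m+1) wᵐ = (1+w)/(1-w)²`; dominated convergence swaps sum and
integral. With `s = √t` one has `z = s²/(1-s²)` and `1 - w = (1-su)(1+su)/(1-s²)`, so the
integrand has a primitive in `u` built from `log(1 ± su)` and `Li₂((1 ± su)/2)`, using
`Li₂'(x) = -log(1-x)/x`.
-/

open Real

/-- The real dilogarithm `Li₂(x) = ∑_{n=1}^∞ xⁿ/n²`. -/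
noncomputable def Li2 (x : ℝ) : ℝ := ∑' n : ℕ, x ^ (n + 1) / (n + 1) ^ 2

open Finset

theorem HasSum.sum_range_mul {f g : ℕ → ℝ} {a b : ℝ} (hf : HasSum f a) (hg : HasSum g b) :
    HasSum (fun n ↦ ∑ k ∈ range (n + 1), f k * g (n - k)) (a * b) := by
  have := hasSum_sum_range_mul_of_summable_norm hf.summable.norm hg.summable.norm
  rwa [hf.tsum_eq, hg.tsum_eq] at this

theorem hasSum_pow_div_natCast {w : ℝ} (hw : |w| < 1) :
    HasSum (fun k : ℕ ↦ w ^ k / k) (-log (1 - w)) :=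
  (hasSum_nat_add_iff' 1).1 <| by simpa using hasSum_pow_div_log_of_abs_lt_one hw

theorem sum_range_pow_div_mul_two_mul_add_one_mul_pow (w : ℝ) (n : ℕ) :
    ∑ k ∈ range (n + 1), w ^ k / k * ((2 * ((n - k : ℕ) : ℝ) + 1) * w ^ (n - k))
      = ((2 * n + 1) * harmonic n - 2 * n) * w ^ n := by
  have hterm : ∀ k ∈ range n, w ^ (k + 1) / ((k + 1 : ℕ) : ℝ) *
      ((2 * ((n - (k + 1) : ℕ) : ℝ) + 1) * w ^ (n - (k + 1)))
        = ((2 * n + 1) * ((k + 1 : ℕ) : ℝ)⁻¹ - 2) * w ^ n := by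
    intro k hk
    have hk : k + 1 ≤ n := mem_range.1 hk
    rw [Nat.cast_sub hk, ← pow_mul_pow_sub w hk]
    push_cast
    field_simp
    ring
  rw [sum_range_succ', sum_congr rfl hterm, ← sum_mul, sum_sub_distrib, ← mul_sum, harmonic]
  simp [mul_comm]

noncomputable def oddHarmonicGF (w : ℝ) : ℝ := (2 * w - (1 + w) * log (1 - w)) / (1 - w) ^ 2

theorem hasSum_two_mul_add_one_mul_harmonic_mul_pow {w : ℝ} (hw : |w| < 1) :
    HasSum (fun n : ℕ ↦ (2 * n + 1) * harmonic n * w ^ n) (oddHarmonicGF w) := by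
  have hw' : ‖w‖ < 1 := hw
  have hw1 : 1 - w ≠ 0 := by linarith [le_abs_self w]
  have hlin := hasSum_coe_mul_geometric_of_norm_lt_one hw'
  have hodd : HasSum (fun m : ℕ ↦ (2 * (m : ℝ) + 1) * w ^ m) ((1 + w) / (1 - w) ^ 2) := by
    rw [show (1 + w) / (1 - w) ^ 2 = 2 * (w / (1 - w) ^ 2) + (1 - w)⁻¹ by field_simp; ring]
    exact ((hlin.mul_left 2).add (hasSum_geometric_of_abs_lt_one hw)).congr_fun fun m ↦ by ring
  convert ((hasSum_pow_div_natCast hw).sum_range_mul hodd).add (hlin.mul_left 2) using 1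
  · ext n
    rw [sum_range_pow_div_mul_two_mul_add_one_mul_pow]
    ring
  · rw [oddHarmonicGF]
    field_simp
    ring

theorem integral_one_sub_sq_pow_succ (n : ℕ) :
    (2 * (n : ℝ) + 3) * ∫ u in (0 : ℝ)..1, (1 - u ^ 2) ^ (n + 1)
      = (2 * (n : ℝ) + 2) * ∫ u in (0 : ℝ)..1, (1 - u ^ 2) ^ n := by
  have hderiv : ∀ u ∈ Set.uIcc (0 : ℝ) 1, HasDerivAt (fun v ↦ v * (1 - v ^ 2) ^ (n + 1))
      ((2 * n + 3) * (1 - u ^ 2) ^ (n + 1) - (2 * n + 2) * (1 - u ^ 2) ^ n) u := by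
    intro u _
    refine ((hasDerivAt_id' u).mul
      (((hasDerivAt_pow 2 u).const_sub 1).fun_pow (n + 1))).congr_deriv ?_
    push_cast
    ring
  have hint : ∀ m : ℕ, IntervalIntegrable (fun u : ℝ ↦ (1 - u ^ 2) ^ m) MeasureTheory.volume 0 1 :=
    fun m ↦ (by fun_prop : Continuous _).intervalIntegrable 0 1
  have := intervalIntegral.integral_eq_sub_of_hasDerivAt hderiv
    (((hint _).const_mul _).sub ((hint _).const_mul _))
  rw [intervalIntegral.integral_sub ((hint _).const_mul _) ((hint _).const_mul _),
    intervalIntegral.integral_const_mul, intervalIntegral.integral_const_mul] at this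
  norm_num at this
  linarith

theorem two_mul_add_one_mul_integral_one_sub_sq_pow (n : ℕ) :
    (2 * (n : ℝ) + 1) * ∫ u in (0 : ℝ)..1, (1 - u ^ 2) ^ n = 4 ^ n / n.centralBinom := by
  induction n with
  | zero => simp
  | succ n ih =>
    have hrec : ((n + 1 : ℕ) : ℝ) * (n + 1).centralBinom = 2 * (2 * n + 1) * n.centralBinom := by
      exact_mod_cast n.succ_mul_centralBinom_succ
    have hC : (n.centralBinom : ℝ) ≠ 0 := by exact_mod_cast n.centralBinom_ne_zero
    have hC' : ((n + 1).centralBinom : ℝ) ≠ 0 := by exact_mod_cast (n + 1).centralBinom_ne_zero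
    have hJ := integral_one_sub_sq_pow_succ n
    rw [eq_div_iff hC] at ih
    rw [eq_div_iff hC']
    push_cast at hrec ⊢
    linear_combination ((n + 1).centralBinom : ℝ) * hJ
      + 2 * (∫ u in (0 : ℝ)..1, (1 - u ^ 2) ^ n) * hrec + 4 * ih

theorem harmonic_cast_nonneg (n : ℕ) : (0 : ℝ) ≤ harmonic n := by
  simp only [harmonic]
  push_cast
  positivity

theorem hasSum_integral_two_mul_add_one_mul_harmonic {z : ℝ} (hz : |z| < 1) :
    HasSum (fun n : ℕ ↦ ∫ u in (0 : ℝ)..1, (2 * n + 1) * harmonic n * (-z * (1 - u ^ 2)) ^ n)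
      (∫ u in (0 : ℝ)..1, oddHarmonicGF (-z * (1 - u ^ 2))) := by
  have hunit : ∀ u ∈ Set.uIoc (0 : ℝ) 1, |-z * (1 - u ^ 2)| ≤ |z| := fun u hu ↦ by
    rw [Set.uIoc_of_le zero_le_one] at hu
    have h₀ : 0 ≤ 1 - u ^ 2 := by nlinarith [hu.1, hu.2]
    rw [abs_mul, abs_neg, abs_of_nonneg h₀]
    nlinarith [abs_nonneg z, hu.1]
  refine intervalIntegral.hasSum_integral_of_dominated_convergence
    (fun n _ ↦ (2 * n + 1) * harmonic n * |z| ^ n)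
    (fun n ↦ (by fun_prop : Continuous _).aestronglyMeasurable)
    (fun n ↦ .of_forall fun u hu ↦ ?_)
    (.of_forall fun _ _ ↦ (hasSum_two_mul_add_one_mul_harmonic_mul_pow (by rwa [abs_abs])).summable)
    intervalIntegrable_const
    (.of_forall fun u hu ↦ hasSum_two_mul_add_one_mul_harmonic_mul_pow ((hunit u hu).trans_lt hz))
  have hH := harmonic_cast_nonneg n
  rw [norm_mul, norm_pow, Real.norm_of_nonneg (by positivity : (0 : ℝ) ≤ (2 * n + 1) * harmonic n)]
  gcongr
  exact hunit u hu

theorem integral_two_mul_add_one_mul_harmonic (z : ℝ) (n : ℕ) :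
    ∫ u in (0 : ℝ)..1, (2 * n + 1) * harmonic n * (-z * (1 - u ^ 2)) ^ n
      = (n.centralBinom : ℝ)⁻¹ * harmonic n * (-1) ^ n * 4 ^ n * z ^ n := by
  calc ∫ u in (0 : ℝ)..1, (2 * n + 1) * harmonic n * (-z * (1 - u ^ 2)) ^ n
      = harmonic n * (-z) ^ n * ((2 * n + 1) * ∫ u in (0 : ℝ)..1, (1 - u ^ 2) ^ n) := by
        rw [← intervalIntegral.integral_const_mul, ← intervalIntegral.integral_const_mul]
        congr 1 with u
        rw [mul_pow]
        ring
    _ = _ := by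
        rw [two_mul_add_one_mul_integral_one_sub_sq_pow, neg_pow]
        ring

theorem hasSum_inv_centralBinom_mul_harmonic_mul_pow {z : ℝ} (hz : |z| < 1) :
    HasSum (fun n : ℕ ↦ (n.centralBinom : ℝ)⁻¹ * harmonic n * (-1) ^ n * 4 ^ n * z ^ n)
      (∫ u in (0 : ℝ)..1, oddHarmonicGF (-z * (1 - u ^ 2))) := by
  simpa only [integral_two_mul_add_one_mul_harmonic] using
    hasSum_integral_two_mul_add_one_mul_harmonic hz

theorem hasDerivAt_Li2 {x : ℝ} (hx0 : x ≠ 0) (hx : |x| < 1) :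
    HasDerivAt Li2 (-log (1 - x) / x) x := by
  set r := (1 + |x|) / 2 with hr
  have hr0 : 0 < r := by positivity
  have hr1 : r < 1 := by linarith
  have hxr : x ∈ Set.Ioo (-r) r := by
    constructor <;> linarith [neg_abs_le x, le_abs_self x]
  have hsum : HasSum (fun n : ℕ ↦ x ^ n / (n + 1)) (-log (1 - x) / x) :=
    ((hasSum_pow_div_log_of_abs_lt_one hx).div_const x).congr_fun fun n ↦ by
      rw [pow_succ]; field_simp
  rw [← hsum.tsum_eq]
  unfold Li2
  refine hasDerivAt_tsum_of_isPreconnected (u := fun n : ℕ ↦ r ^ n)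
    (summable_geometric_of_lt_one hr0.le hr1) isOpen_Ioo
    (convex_Ioo _ _).isPreconnected (fun n y _ ↦ ?_) (fun n y hy ↦ ?_) (y₀ := 0)
    (g := fun n y ↦ y ^ (n + 1) / ((n : ℝ) + 1) ^ 2) (g' := fun n y ↦ y ^ n / ((n : ℝ) + 1))
    ⟨by linarith, hr0⟩ (by simp) hxr
  · refine ((hasDerivAt_pow (n + 1) y).div_const _).congr_deriv ?_
    push_cast
    field_simp
  · have hy : |y| ≤ r := abs_le.2 ⟨hy.1.le, hy.2.le⟩
    rw [norm_div, norm_pow, Real.norm_eq_abs, Real.norm_of_nonneg (by positivity)]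
    calc |y| ^ n / (n + 1) ≤ |y| ^ n := div_le_self (by positivity) (by simp)
      _ ≤ r ^ n := pow_le_pow_left₀ (abs_nonneg y) hy n

noncomputable def oddHarmonicGFPrimitive (s u : ℝ) : ℝ :=
  (1 - s ^ 2) * s / 2 * ((log (1 + s * u) - log (1 - s * u)) *
      ((log (1 - s * u) + log (1 + s * u)) / 2 - log (1 - s ^ 2) + log 2 - 2)
    + Li2 ((1 - s * u) / 2) - Li2 ((1 + s * u) / 2))
  - (1 - s ^ 2) ^ 2 * u * (log (1 - s * u) + log (1 + s * u) - log (1 - s ^ 2))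
    / ((1 - s * u) * (1 + s * u))

theorem hasDerivAt_oddHarmonicGFPrimitive {s u : ℝ} (hs : |s| < 1) (hu : |u| ≤ 1) :
    HasDerivAt (oddHarmonicGFPrimitive s)
      (oddHarmonicGF (-(s ^ 2 / (1 - s ^ 2)) * (1 - u ^ 2))) u := by
  have hsu : |s * u| < 1 := by
    rw [abs_mul]; nlinarith [abs_nonneg s, abs_nonneg u]
  obtain ⟨hsu₁, hsu₂⟩ := abs_lt.1 hsu
  have ha : 0 < 1 - s * u := by linarith
  have hb : 0 < 1 + s * u := by linarith
  have hq : 0 < 1 - s ^ 2 := by nlinarith [sq_abs s, abs_nonneg s]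
  have hm : HasDerivAt (fun v ↦ 1 - s * v) (-s) u := by
    simpa using ((hasDerivAt_id u).const_mul s).const_sub 1
  have hp : HasDerivAt (fun v ↦ 1 + s * v) s u := by
    simpa using ((hasDerivAt_id u).const_mul s).const_add 1
  have hLiM := (hasDerivAt_Li2 (by linarith : (1 - s * u) / 2 ≠ 0)
    (abs_lt.2 ⟨by linarith, by linarith⟩)).comp u (hm.div_const 2)
  have hLiP := (hasDerivAt_Li2 (by linarith : (1 + s * u) / 2 ≠ 0)
    (abs_lt.2 ⟨by linarith, by linarith⟩)).comp u (hp.div_const 2)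
  have hLa := hm.log ha.ne'
  have hLb := hp.log hb.ne'
  have hG := (((((hLb.fun_sub hLa).fun_mul
      ((((hLa.fun_add hLb).div_const 2).sub_const (log (1 - s ^ 2))).add_const (log 2)
        |>.sub_const 2)).fun_add hLiM).fun_sub hLiP).const_mul ((1 - s ^ 2) * s / 2)).fun_sub
    ((((hasDerivAt_id' u).const_mul ((1 - s ^ 2) ^ 2)).fun_mul
      ((hLa.fun_add hLb).sub_const (log (1 - s ^ 2)))).fun_div (hm.fun_mul hp) (mul_pos ha hb).ne')
  unfold oddHarmonicGFPrimitive
  refine hG.congr_deriv ?_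
  have h₁ : (1 : ℝ) - (1 - s * u) / 2 = (1 + s * u) / 2 := by ring
  have h₂ : (1 : ℝ) - (1 + s * u) / 2 = (1 - s * u) / 2 := by ring
  have harg : 1 - -(s ^ 2 / (1 - s ^ 2)) * (1 - u ^ 2)
      = (1 - s * u) * (1 + s * u) / (1 - s ^ 2) := by
    field_simp
    ring
  rw [oddHarmonicGF, h₁, h₂, harg, log_div (mul_pos ha hb).ne' hq.ne', log_mul ha.ne' hb.ne',
    log_div hb.ne' two_ne_zero, log_div ha.ne' two_ne_zero]
  field_simp
  ring

theorem continuousOn_oddHarmonicGF : ContinuousOn oddHarmonicGF (Set.Iio 1) := by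
  have h : ∀ w ∈ Set.Iio (1 : ℝ), 1 - w ≠ 0 := fun w hw ↦ (sub_pos.2 hw).ne'
  have hlog : ContinuousOn (fun w ↦ log (1 - w)) (Set.Iio 1) :=
    (continuousOn_const.sub continuousOn_id).log h
  exact ContinuousOn.div (by fun_prop) (by fun_prop) fun w hw ↦ pow_ne_zero 2 (h w hw)

theorem integral_oddHarmonicGF {s : ℝ} (hs : |s| < 1) :
    ∫ u in (0 : ℝ)..1, oddHarmonicGF (-(s ^ 2 / (1 - s ^ 2)) * (1 - u ^ 2)) =
      (1 - s ^ 2) * (s * log ((1 - s) / (1 + s)) * (1 + 1 / 4 * log ((1 - s ^ 2) / 4)) -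
        s / 2 * (Li2 ((1 + s) / 2) - Li2 ((1 - s) / 2))) := by
  obtain ⟨hs₁, hs₂⟩ := abs_lt.1 hs
  have ha : 0 < 1 - s := by linarith
  have hb : 0 < 1 + s := by linarith
  have hq : 0 < 1 - s ^ 2 := by nlinarith
  have hunit : ∀ u ∈ Set.uIcc (0 : ℝ) 1, |u| ≤ 1 := fun u hu ↦ by
    rw [Set.uIcc_of_le zero_le_one] at hu
    exact abs_le.2 ⟨by linarith [hu.1], hu.2⟩
  have hcont : ContinuousOn (fun u ↦ oddHarmonicGF (-(s ^ 2 / (1 - s ^ 2)) * (1 - u ^ 2)))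
      (Set.uIcc 0 1) := by
    refine continuousOn_oddHarmonicGF.comp (by fun_prop) fun u hu ↦ ?_
    have : 0 ≤ 1 - u ^ 2 := by nlinarith [hunit u hu, sq_abs u, abs_nonneg u]
    have : 0 ≤ s ^ 2 / (1 - s ^ 2) := by positivity
    exact Set.mem_Iio.2 (by nlinarith)
  rw [intervalIntegral.integral_eq_sub_of_hasDerivAt
    (fun u hu ↦ hasDerivAt_oddHarmonicGFPrimitive hs (hunit u hu)) hcont.intervalIntegrable]
  have hlogq : log (1 - s ^ 2) = log (1 - s) + log (1 + s) := by
    rw [← log_mul ha.ne' hb.ne']; ring_nf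
  have hlog4 : log 4 = 2 * log 2 := by
    rw [show (4 : ℝ) = 2 ^ 2 by norm_num, log_pow]; norm_num
  simp only [oddHarmonicGFPrimitive, mul_zero, mul_one, add_zero, sub_zero, log_one]
  rw [log_div ha.ne' hb.ne', log_div hq.ne' four_ne_zero, hlogq, hlog4]
  field_simp
  ring

theorem stmt0 (z t : ℝ) (hz0 : 0 ≤ z) (hz1 : z < 1) (ht : t = z / (1 + z)) :
    HasSum
      (fun n : ℕ => ((Nat.centralBinom n : ℝ))⁻¹ * (harmonic n : ℝ) * (-1) ^ n * 4 ^ n * z ^ n)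
      ((1 - t) *
        (Real.sqrt t * Real.log ((1 - Real.sqrt t) / (1 + Real.sqrt t)) *
            (1 + (1 / 4) * Real.log ((1 - t) / 4)) -
          (Real.sqrt t / 2) * (Li2 ((1 + Real.sqrt t) / 2) - Li2 ((1 - Real.sqrt t) / 2)))) := by
  have ht0 : 0 ≤ t := by rw [ht]; positivity
  have ht1 : t < 1 := by rw [ht, div_lt_one (by linarith)]; linarith
  set s := √t
  have hs2 : s ^ 2 = t := sq_sqrt ht0
  have hs : |s| < 1 := by rw [← sq_lt_one_iff_abs_lt_one, hs2]; exact ht1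
  have hz : z = s ^ 2 / (1 - s ^ 2) := by
    rw [hs2, ht]; field_simp; ring
  have key := hasSum_inv_centralBinom_mul_harmonic_mul_pow (abs_lt.2 ⟨by linarith, hz1⟩)
  rwa [hz, integral_oddHarmonicGF hs, ← hz, hs2] at key
end

section
/- Let (a_n)_{n≥0} be a sequence of complex numbers and r > 0 be such that the power series ∑_{n=0}^∞ a_n z^n converges for every complex z with |z| < r. Then there exists ρ > 0 such that for every complex z with |z| < ρ, all series below converge and ∑_{n=0}^∞ a_n H_n z^n + log(1+z) · ∑_{n=0}^∞ a_n z^n = (1/(1+z)) · ∑_{n=0}^∞ (z/(1+z))^n · H_n · ( ∑_{k=0}^n binom(n,k) a_k ). -/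
/-!
Put `w = z / (1 + z)`, so that `1 - w = (1 + z)⁻¹`. The Cauchy product of
`-log (1 - w) = ∑ wⁱ / i` with `w ^ k / (1 - w) ^ (k + 1) = ∑ (n choose k) wⁿ`, together with
`∑_{i ≤ n} (n - i choose k) / i = (n choose k) (Hₙ - Hₖ)`, gives
`∑ₙ (n choose k) Hₙ wⁿ = w ^ k / (1 - w) ^ (k + 1) (Hₖ - log (1 - w))`,
which is `(1 + z) zᵏ (Hₖ + log (1 + z))`. Hence the double series `∑ aₖ (n choose k) Hₙ wⁿ`,
summed by columns, is `1 + z` times the left side, and summed by rows it is the right side.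
Both summations are legitimate for small `z`: if `‖aₖ‖ sᵏ ≤ M`, the norms in the `n`-th row
sum to at most `M n (‖w‖ (1 + s⁻¹))ⁿ`.
-/

open Complex Finset

lemma sum_range_one_div_eq_harmonic (n : ℕ) :
    ∑ i ∈ range (n + 1), (1 / i : ℚ) = harmonic n := by
  simp [sum_range_succ', harmonic]

lemma harmonic_nonneg (n : ℕ) : 0 ≤ harmonic n := by
  unfold harmonic
  positivity

lemma harmonic_le_self (n : ℕ) : harmonic n ≤ n := by
  calc harmonic n = ∑ i ∈ range n, ((i + 1 : ℕ) : ℚ)⁻¹ := rfl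
    _ ≤ ∑ _i ∈ range n, (1 : ℚ) :=
        sum_le_sum fun i _ => inv_le_one_of_one_le₀ (by exact_mod_cast i.succ_pos)
    _ = n := by simp

lemma choose_succ_mul_harmonic_sub (n k : ℕ) :
    ((n + 1).choose (k + 1) : ℚ) * (harmonic (n + 1) - harmonic (k + 1)) =
      n.choose k * (harmonic n - harmonic k) +
        n.choose (k + 1) * (harmonic n - harmonic (k + 1)) := by
  have hpascal : ((n + 1).choose (k + 1) : ℚ) = n.choose k + n.choose (k + 1) := by
    exact_mod_cast Nat.choose_succ_succ n k
  have habsorb : ((n + 1 : ℕ) : ℚ) * n.choose k = (n + 1).choose (k + 1) * (k + 1 : ℕ) := by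
    exact_mod_cast Nat.add_one_mul_choose_eq n k
  rw [harmonic_succ n, harmonic_succ k, hpascal]
  rw [hpascal] at habsorb
  push_cast at habsorb ⊢
  field_simp
  linear_combination -habsorb

-- The `i = 0` term is `_ / 0 = 0`, as is the `i = 0` term of `-log (1 - w) = ∑ wⁱ / i`.
lemma sum_range_choose_sub_div (n k : ℕ) :
    ∑ i ∈ range (n + 1), ((n - i).choose k : ℚ) / i =
      n.choose k * (harmonic n - harmonic k) := by
  induction n generalizing k with
  | zero => cases k <;> simp
  | succ n ih =>
    cases k with
    | zero => simpa using sum_range_one_div_eq_harmonic (n + 1)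
    | succ k =>
      have hpascal : ∀ i ∈ range (n + 1), ((n + 1 - i).choose (k + 1) : ℚ) / i =
          ((n - i).choose k : ℚ) / i + ((n - i).choose (k + 1) : ℚ) / i := by
        intro i hi
        rw [Nat.sub_add_comm (mem_range_succ_iff.mp hi), Nat.choose_succ_succ]
        push_cast
        ring
      rw [sum_range_succ, Nat.sub_self, Nat.choose_zero_succ, Nat.cast_zero, zero_div, add_zero,
        sum_congr rfl hpascal, sum_add_distrib, ih, ih, choose_succ_mul_harmonic_sub]

lemma hasSum_choose_mul_pow {𝕜 : Type*} [NormedField 𝕜] [CompleteSpace 𝕜] (k : ℕ) {w : 𝕜}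
    (hw : ‖w‖ < 1) :
    HasSum (fun n ↦ (n.choose k : 𝕜) * w ^ n) (w ^ k / (1 - w) ^ (k + 1)) := by
  have hshift :
      HasSum (fun n ↦ ((n + k).choose k : 𝕜) * w ^ (n + k)) (w ^ k / (1 - w) ^ (k + 1)) := by
    simpa [pow_add, mul_assoc, mul_comm, mul_left_comm, div_eq_mul_inv] using
      (hasSum_choose_mul_geometric_of_norm_lt_one k hw).mul_left (w ^ k)
  have hinit : ∑ i ∈ range k, (i.choose k : 𝕜) * w ^ i = 0 :=
    sum_eq_zero fun i hi ↦ by simp [Nat.choose_eq_zero_of_lt (mem_range.mp hi)]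
  exact (hasSum_nat_add_iff' k).mp (by rwa [hinit, sub_zero])

lemma summable_norm_pow_div_natCast {w : ℂ} (hw : ‖w‖ < 1) :
    Summable fun n : ℕ ↦ ‖w ^ n / n‖ := by
  refine (summable_geometric_of_lt_one (norm_nonneg w) hw).of_nonneg_of_le (fun _ ↦ norm_nonneg _)
    fun n ↦ ?_
  rcases n.eq_zero_or_pos with rfl | hn
  · simp
  rw [norm_div, norm_pow, norm_natCast]
  exact div_le_self (by positivity) (by exact_mod_cast hn)

lemma hasSum_choose_mul_harmonic_mul_pow (k : ℕ) {w : ℂ} (hw : ‖w‖ < 1) :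
    HasSum (fun n ↦ (n.choose k : ℂ) * harmonic n * w ^ n)
      (w ^ k / (1 - w) ^ (k + 1) * (harmonic k - log (1 - w))) := by
  have hgeom := hasSum_choose_mul_pow k hw
  have hnorm : Summable fun n ↦ ‖(n.choose k : ℂ) * w ^ n‖ := by
    simpa [norm_pow] using (hasSum_choose_mul_pow k (by rwa [norm_norm])).summable
  have hcauchy := hasSum_sum_range_mul_of_summable_norm (summable_norm_pow_div_natCast hw) hnorm
  rw [(hasSum_taylorSeries_neg_log hw).tsum_eq, hgeom.tsum_eq] at hcauchy
  have hterm : ∀ n, ∑ i ∈ range (n + 1), w ^ i / i * ((n - i).choose k * w ^ (n - i)) =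
      n.choose k * (harmonic n - harmonic k) * w ^ n := by
    intro n
    have := congrArg (fun q : ℚ ↦ (q : ℂ) * w ^ n) (sum_range_choose_sub_div n k)
    push_cast at this
    rw [← this, sum_mul]
    refine sum_congr rfl fun i hi ↦ ?_
    rw [← pow_sub_mul_pow w (mem_range_succ_iff.mp hi)]
    ring
  simp only [hterm] at hcauchy
  rw [show w ^ k / (1 - w) ^ (k + 1) * (harmonic k - log (1 - w)) =
      -log (1 - w) * (w ^ k / (1 - w) ^ (k + 1)) + harmonic k * (w ^ k / (1 - w) ^ (k + 1)) by ring]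
  exact (hcauchy.add (hgeom.mul_left (harmonic k : ℂ))).congr_fun fun n ↦ by ring

lemma sum_range_norm_mul_choose_le {E : Type*} [SeminormedAddCommGroup E] {a : ℕ → E}
    {s M : ℝ} (hs : 0 < s) (ha : ∀ k, ‖a k‖ * s ^ k ≤ M) (n : ℕ) :
    ∑ k ∈ range (n + 1), ‖a k‖ * n.choose k ≤ M * (1 + s⁻¹) ^ n := by
  calc ∑ k ∈ range (n + 1), ‖a k‖ * n.choose k
      ≤ ∑ k ∈ range (n + 1), M * (s⁻¹ ^ k * 1 ^ (n - k) * n.choose k) := by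
        refine sum_le_sum fun k _ ↦ ?_
        have hk : ‖a k‖ ≤ M * s⁻¹ ^ k := by
          rw [inv_pow, ← div_eq_mul_inv, le_div_iff₀ (by positivity)]
          exact ha k
        simpa [mul_assoc] using mul_le_mul_of_nonneg_right hk (Nat.cast_nonneg (n.choose k))
    _ = M * (1 + s⁻¹) ^ n := by rw [← mul_sum, ← add_pow, add_comm]

def eulerHarmonicTerm (a : ℕ → ℂ) (w : ℂ) (p : ℕ × ℕ) : ℂ :=
  a p.2 * p.1.choose p.2 * harmonic p.1 * w ^ p.1

section eulerHarmonicTerm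

variable {a : ℕ → ℂ} {w : ℂ}

lemma eulerHarmonicTerm_eq_zero_of_notMem_range {n k : ℕ} (h : k ∉ range (n + 1)) :
    eulerHarmonicTerm a w (n, k) = 0 := by
  simp [eulerHarmonicTerm, Nat.choose_eq_zero_of_lt (by simpa [Nat.lt_succ_iff] using h)]

lemma sum_range_norm_eulerHarmonicTerm_le {s M : ℝ} (hs : 0 < s)
    (ha : ∀ k, ‖a k‖ * s ^ k ≤ M) (n : ℕ) :
    ∑ k ∈ range (n + 1), ‖eulerHarmonicTerm a w (n, k)‖ ≤
      M * (n * (‖w‖ * (1 + s⁻¹)) ^ n) := by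
  have hH : ‖(harmonic n : ℂ)‖ ≤ n := by
    rw [norm_ratCast, abs_of_nonneg (by exact_mod_cast harmonic_nonneg n)]
    exact_mod_cast harmonic_le_self n
  calc ∑ k ∈ range (n + 1), ‖eulerHarmonicTerm a w (n, k)‖
      = (∑ k ∈ range (n + 1), ‖a k‖ * n.choose k) *
          (‖(harmonic n : ℂ)‖ * ‖w‖ ^ n) := by
        simp only [eulerHarmonicTerm, norm_mul, norm_pow, norm_natCast, sum_mul, mul_assoc]
    _ ≤ M * (1 + s⁻¹) ^ n * (n * ‖w‖ ^ n) := by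
        gcongr
        · exact (sum_nonneg fun _ _ ↦ by positivity).trans (sum_range_norm_mul_choose_le hs ha n)
        · exact sum_range_norm_mul_choose_le hs ha n
    _ = M * (n * (‖w‖ * (1 + s⁻¹)) ^ n) := by rw [mul_pow]; ring

lemma summable_eulerHarmonicTerm {s M : ℝ} (hs : 0 < s) (ha : ∀ k, ‖a k‖ * s ^ k ≤ M)
    (hw : ‖w‖ * (1 + s⁻¹) < 1) : Summable (eulerHarmonicTerm a w) := by
  refine Summable.of_norm
    ((summable_prod_of_nonneg fun _ ↦ norm_nonneg _).mpr ⟨fun n ↦ ?_, ?_⟩)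
  · exact summable_of_ne_finset_zero fun k hk ↦ by
      rw [eulerHarmonicTerm_eq_zero_of_notMem_range hk, norm_zero]
  · have hgeom : Summable fun n : ℕ ↦ M * (n * (‖w‖ * (1 + s⁻¹)) ^ n) :=
      ((summable_pow_mul_geometric_of_norm_lt_one (r := ‖w‖ * (1 + s⁻¹)) 1
        (by rw [Real.norm_of_nonneg (by positivity)]; exact hw)).mul_left M).congr fun n ↦ by
          rw [pow_one]
    refine hgeom.of_nonneg_of_le (fun n ↦ tsum_nonneg fun _ ↦ norm_nonneg _) fun n ↦ ?_
    rw [tsum_eq_sum fun k hk ↦ by rw [eulerHarmonicTerm_eq_zero_of_notMem_range hk, norm_zero]]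
    exact sum_range_norm_eulerHarmonicTerm_le hs ha n

lemma exists_hasSum_harmonic_binomial_transform {s M : ℝ} (hs : 0 < s)
    (ha : ∀ k, ‖a k‖ * s ^ k ≤ M) (hw : ‖w‖ * (1 + s⁻¹) < 1) :
    ∃ T, HasSum (fun n ↦ w ^ n * harmonic n * ∑ k ∈ range (n + 1), n.choose k * a k) T ∧
      HasSum (fun k ↦ a k * (w ^ k / (1 - w) ^ (k + 1) * (harmonic k - log (1 - w)))) T := by
  have hw1 : ‖w‖ < 1 := by
    nlinarith [norm_nonneg w, inv_pos.mpr hs]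
  have hsum := (summable_eulerHarmonicTerm hs ha hw).hasSum
  refine ⟨∑' p, eulerHarmonicTerm a w p, ?_, ?_⟩
  · refine (hsum.prod_fiberwise fun n ↦ hasSum_sum_of_ne_finset_zero fun k hk ↦
      eulerHarmonicTerm_eq_zero_of_notMem_range hk).congr_fun fun n ↦ ?_
    simp only [eulerHarmonicTerm, mul_sum]
    exact sum_congr rfl fun k _ ↦ by ring
  · refine (((Equiv.prodComm ℕ ℕ).hasSum_iff).mpr hsum).prod_fiberwise fun k ↦ ?_
    exact ((hasSum_choose_mul_harmonic_mul_pow k hw1).mul_left (a k)).congr_fun fun n ↦ by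
      simp only [Function.comp_apply, Equiv.prodComm_apply, Prod.swap_prod_mk,
        eulerHarmonicTerm]
      ring

end eulerHarmonicTerm

lemma norm_div_one_add_mul_lt {z : ℂ} {c : ℝ} (hc : 0 ≤ c) (hz : ‖z‖ * (2 + c) < 1) :
    ‖z / (1 + z)‖ * (1 + c) < 1 := by
  have h1 : 1 - ‖z‖ ≤ ‖1 + z‖ := by simpa using norm_sub_norm_le (1 : ℂ) (-z)
  rw [norm_div, div_mul_eq_mul_div, div_lt_one (by nlinarith [norm_nonneg z])]
  nlinarith

lemma div_one_add_pow_div_one_sub_pow_mul {z : ℂ} (hz : 1 + z ∈ slitPlane) (k : ℕ) (c : ℂ) :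
    (z / (1 + z)) ^ k / (1 - z / (1 + z)) ^ (k + 1) * (c - log (1 - z / (1 + z))) =
      (1 + z) * z ^ k * (c + log (1 + z)) := by
  have h0 : 1 + z ≠ 0 := slitPlane_ne_zero hz
  have hinv : 1 - z / (1 + z) = (1 + z)⁻¹ := by field_simp; ring
  rw [hinv, log_inv _ (slitPlane_arg_ne_pi hz), inv_pow, div_inv_eq_mul, div_pow, pow_succ]
  field_simp
  ring

theorem stmt4 (a : ℕ → ℂ) (r : ℝ) (hr : 0 < r)
    (hconv : ∀ z : ℂ, ‖z‖ < r → Summable (fun n : ℕ => a n * z ^ n)) :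
    ∃ ρ : ℝ, 0 < ρ ∧ ∀ z : ℂ, ‖z‖ < ρ →
      ∃ A B C : ℂ,
        HasSum (fun n : ℕ => a n * (harmonic n : ℝ) * z ^ n) A ∧
        HasSum (fun n : ℕ => a n * z ^ n) B ∧
        HasSum (fun n : ℕ =>
          (z / (1 + z)) ^ n * (harmonic n : ℝ) *
            (∑ k ∈ Finset.range (n + 1), (n.choose k : ℂ) * a k)) C ∧
        A + Complex.log (1 + z) * B = (1 / (1 + z)) * C := by
  obtain ⟨s, hs, hsr⟩ := exists_between hr
  obtain ⟨M, hM⟩ := (hconv s (by rwa [norm_real, Real.norm_of_nonneg hs.le]))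
    |>.tendsto_atTop_zero.norm.bddAbove_range
  have ha : ∀ k, ‖a k‖ * s ^ k ≤ M := fun k ↦ by
    simpa [norm_mul, norm_pow, abs_of_pos hs] using hM ⟨k, rfl⟩
  have hpos : 0 < 2 + s⁻¹ := by positivity
  refine ⟨(2 + s⁻¹)⁻¹, inv_pos.mpr hpos, fun z hz ↦ ?_⟩
  have hz2 : ‖z‖ * (2 + s⁻¹) < 1 := by simpa [hpos.ne'] using mul_lt_mul_of_pos_right hz hpos
  have hzs : ‖z‖ < s := by nlinarith [norm_nonneg z, mul_inv_cancel₀ hs.ne']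
  have hslit : 1 + z ∈ slitPlane :=
    mem_slitPlane_of_norm_lt_one (by nlinarith [norm_nonneg z, inv_pos.mpr hs])
  have h0 : 1 + z ≠ 0 := slitPlane_ne_zero hslit
  obtain ⟨T, hrows, hcols⟩ := exists_hasSum_harmonic_binomial_transform hs ha
    (norm_div_one_add_mul_lt (inv_pos.mpr hs).le hz2)
  simp only [div_one_add_pow_div_one_sub_pow_mul hslit] at hcols
  have hB := (hconv z (hzs.trans hsr)).hasSum
  have hA := ((hcols.sub (hB.mul_left ((1 + z) * log (1 + z)))).div_const (1 + z)).congr_fun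
    (g := fun n ↦ a n * harmonic n * z ^ n) fun n ↦ by field_simp; ring
  simp only [ofReal_ratCast]
  exact ⟨_, _, T, hA, hB, hrows, by field_simp; ring⟩
end

section
/- For every natural number n, ∑_{k=0}^n binom(n,k) · (binom(2k,k))⁻¹ · (−1)^k · 4^k = 1/(1 − 2n), where both sides are interpreted as rational (or real) numbers. -/
/-!
With `a k = (-4) ^ k / centralBinom k`, the summand `t k = choose n k * a k` is hypergeometric
with `t (k + 1) / t k = (k - n) / (k + 1/2)`, so it is Gosper-summable: the antidifference
`F k = (2k - 1) * t k` satisfies `F (k + 1) - F k = (1 - 2n) * t k`. Summing over `k ≤ n`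
telescopes to `F (n + 1) - F 0 = 0 - (-1) = 1`.
-/

open Finset

theorem Nat.cast_choose_succ_mul {R : Type*} [CommRing R] (n k : ℕ) :
    (n.choose (k + 1) : R) * (k + 1) = n.choose k * (n - k) := by
  have h := congrArg (Nat.cast : ℕ → R) (Nat.add_one_mul_choose_eq n k)
  push_cast [Nat.choose_succ_succ'] at h
  linear_combination -h

section

variable {K : Type*} [Field K] [CharZero K]

theorem two_mul_add_one_mul_neg_four_pow_div_centralBinom_succ (k : ℕ) :
    (2 * k + 1 : K) * ((-4) ^ (k + 1) / (k + 1).centralBinom) =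
      -2 * (k + 1) * ((-4) ^ k / k.centralBinom) := by
  have : (k.centralBinom : K) ≠ 0 := Nat.cast_ne_zero.mpr (Nat.centralBinom_ne_zero k)
  have : ((k + 1).centralBinom : K) ≠ 0 := Nat.cast_ne_zero.mpr (Nat.centralBinom_ne_zero _)
  have h : ((k + 1) * (k + 1).centralBinom : K) = 2 * (2 * k + 1) * k.centralBinom := by
    exact_mod_cast Nat.succ_mul_centralBinom_succ k
  field_simp
  linear_combination 2 * (-4) ^ k * h

noncomputable def centralBinomAntidiff (n k : ℕ) : K :=
  (2 * k - 1) * n.choose k * ((-4) ^ k / k.centralBinom)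

theorem centralBinomAntidiff_succ_sub (n k : ℕ) :
    centralBinomAntidiff n (k + 1) - centralBinomAntidiff n k =
      (1 - 2 * n : K) * (n.choose k * ((-4) ^ k / k.centralBinom)) := by
  unfold centralBinomAntidiff
  push_cast
  linear_combination (n.choose (k + 1) : K) *
      two_mul_add_one_mul_neg_four_pow_div_centralBinom_succ (K := K) k -
    2 * ((-4) ^ k / k.centralBinom : K) * Nat.cast_choose_succ_mul (R := K) n k

theorem one_sub_two_mul_mul_sum_choose_mul_neg_four_pow_div_centralBinom (n : ℕ) :
    (1 - 2 * n : K) * ∑ k ∈ range (n + 1), (n.choose k : K) * ((-4) ^ k / k.centralBinom) = 1 := by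
  simp_rw [mul_sum, ← centralBinomAntidiff_succ_sub, sum_range_sub, centralBinomAntidiff,
    Nat.choose_succ_self]
  simp

end

theorem stmt7 (n : ℕ) :
    ∑ k ∈ Finset.range (n + 1),
        (n.choose k : ℝ) * ((Nat.centralBinom k : ℝ))⁻¹ * (-1) ^ k * 4 ^ k =
      1 / (1 - 2 * (n : ℝ)) := by
  refine eq_one_div_of_mul_eq_one_right ?_
  convert one_sub_two_mul_mul_sum_choose_mul_neg_four_pow_div_centralBinom (K := ℝ) n using 2
  refine Finset.sum_congr rfl fun k _ => ?_
  rw [show (-4 : ℝ) = -1 * 4 by norm_num, mul_pow]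
  ring
end

section
/- For every real z with 0 ≤ z < 1, setting t = z/(1+z), the series ∑_{n=0}^∞ (binom(2n,n))⁻¹ · (−1)^n · 4^n · z^n converges and equals (1/(1+z)) · [ 1 + (1/2) · √t · log((1−√t)/(1+√t)) ]. -/
open Real Filter Topology Set

/-!
On `0 < z < 1` both sides solve the linear equation `2 z (1 + z) y' = (1 - 2 z) y - 1`: for the
series this is the recurrence `(2n + 1) c (n + 1) = -(2n + 2) c n` of its coefficients
`c n = (-4)^n / binom(2n, n)`, for the closed form a direct computation. Their difference `D` solves
the homogeneous equation, whose solutions are the multiples of `√z / (1 + z)^(3/2)`, so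
`D^2 (1 + z)^3 / z` is constant. As both sides are `1 + o(√z)` at `0`, this constant is `0`.
-/

theorem summable_add_one_mul_add_two_mul_geometric {r : ℝ} (hr0 : 0 ≤ r) (hr1 : r < 1) :
    Summable fun n : ℕ => ((n : ℝ) + 1) * ((n : ℝ) + 2) * r ^ n := by
  have hr : ‖r‖ < 1 := by rwa [norm_of_nonneg hr0]
  have h2 := summable_pow_mul_geometric_of_norm_lt_one 2 hr
  have h1 := summable_pow_mul_geometric_of_norm_lt_one 1 hr
  have h0 := summable_geometric_of_lt_one hr0 hr1
  refine ((h2.add (h1.mul_left 3)).add (h0.mul_left 2)).congr fun n => ?_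
  ring

section PowerSeries

variable {a : ℕ → ℝ} {C : ℝ}

theorem summable_mul_pow_of_abs_le (ha : ∀ n, |a n| ≤ C * (n + 1)) {x : ℝ} (hx : |x| < 1) :
    Summable fun n => a n * x ^ n := by
  refine .of_norm_bounded
    ((summable_add_one_mul_add_two_mul_geometric (abs_nonneg x) hx).mul_left C) fun n => ?_
  rw [norm_mul, norm_pow, Real.norm_eq_abs, Real.norm_eq_abs]
  calc |a n| * |x| ^ n ≤ C * (n + 1) * |x| ^ n := by gcongr; exact ha n
    _ ≤ C * ((n + 1) * (n + 2)) * |x| ^ n := by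
        have hC : 0 ≤ C := by simpa using (abs_nonneg _).trans (ha 0)
        gcongr
        nlinarith [Nat.cast_nonneg (α := ℝ) n]
    _ = C * (((n : ℝ) + 1) * ((n : ℝ) + 2) * |x| ^ n) := by ring

theorem norm_deriv_coeff_mul_pow_le (ha : ∀ n, |a n| ≤ C * (n + 1)) (n : ℕ) {y r : ℝ}
    (hy : |y| ≤ r) :
    ‖(n + 1) * a (n + 1) * y ^ n‖ ≤ C * (((n : ℝ) + 1) * ((n : ℝ) + 2) * r ^ n) := by
  have hC : 0 ≤ C := by simpa using (abs_nonneg _).trans (ha 0)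
  rw [norm_mul, norm_mul, norm_pow, Real.norm_eq_abs, Real.norm_eq_abs, Real.norm_eq_abs,
    abs_of_nonneg (by positivity)]
  calc ((n : ℝ) + 1) * |a (n + 1)| * |y| ^ n
      ≤ ((n : ℝ) + 1) * (C * ((n + 1 : ℕ) + 1)) * r ^ n := by
        have := ha (n + 1)
        gcongr
    _ = C * (((n : ℝ) + 1) * ((n : ℝ) + 2) * r ^ n) := by push_cast; ring

theorem summable_deriv_coeff_mul_pow_of_abs_le (ha : ∀ n, |a n| ≤ C * (n + 1)) {x : ℝ}
    (hx : |x| < 1) : Summable fun n => (n + 1) * a (n + 1) * x ^ n :=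
  .of_norm_bounded ((summable_add_one_mul_add_two_mul_geometric (abs_nonneg x) hx).mul_left C)
    fun n => norm_deriv_coeff_mul_pow_le ha n le_rfl

theorem hasDerivAt_tsum_mul_pow (ha : ∀ n, |a n| ≤ C * (n + 1)) {x : ℝ} (hx : |x| < 1) :
    HasDerivAt (fun y => ∑' n, a n * y ^ n) (∑' n, (n + 1) * a (n + 1) * x ^ n) x := by
  obtain ⟨r, hxr, hr1⟩ := exists_between hx
  have hr0 : 0 < r := (abs_nonneg x).trans_lt hxr
  replace hxr : x ∈ Metric.ball (0 : ℝ) r := by simpa using hxr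
  have htail : HasDerivAt (fun y => ∑' n, a (n + 1) * y ^ (n + 1))
      (∑' n, (n + 1) * a (n + 1) * x ^ n) x := by
    refine hasDerivAt_tsum_of_isPreconnected (g := fun n y => a (n + 1) * y ^ (n + 1))
      (g' := fun n y => (n + 1) * a (n + 1) * y ^ n)
      ((summable_add_one_mul_add_two_mul_geometric hr0.le hr1).mul_left C) Metric.isOpen_ball
      (convex_ball 0 r).isPreconnected (fun n y _ => ?_) (fun n y hy => ?_)
      (Metric.mem_ball_self hr0) (by simp) hxr
    · have h := (hasDerivAt_pow (n + 1) y).const_mul (a (n + 1))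
      rwa [Nat.add_sub_cancel, Nat.cast_add_one, mul_left_comm, ← mul_assoc] at h
    · rw [Metric.mem_ball, dist_zero_right, Real.norm_eq_abs] at hy
      exact norm_deriv_coeff_mul_pow_le ha n hy.le
  have hball : ∀ᶠ y in 𝓝 x, ∑' n, a n * y ^ n = a 0 + ∑' n, a (n + 1) * y ^ (n + 1) := by
    filter_upwards [Metric.isOpen_ball.mem_nhds hxr] with y hy
    rw [Metric.mem_ball, dist_zero_right, Real.norm_eq_abs] at hy
    rw [(summable_mul_pow_of_abs_le ha (hy.trans hr1)).tsum_eq_zero_add, pow_zero, mul_one]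
  exact (htail.const_add (a 0)).congr_of_eventuallyEq hball

end PowerSeries

theorem tendsto_sub_div_sqrt_of_hasDerivAt {f : ℝ → ℝ} {f' : ℝ} (hf : HasDerivAt f f' 0) :
    Tendsto (fun x => (f x - f 0) / √x) (𝓝[>] 0) (𝓝 0) := by
  have hslope : Tendsto (slope f 0) (𝓝[>] 0) (𝓝 f') :=
    (hasDerivAt_iff_tendsto_slope.mp hf).mono_left (nhdsWithin_mono _ fun x hx => ne_of_gt hx)
  have hsqrt : Tendsto (fun x => √x) (𝓝[>] 0) (𝓝 0) := by
    simpa using (continuous_sqrt.tendsto 0).mono_left nhdsWithin_le_nhds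
  refine Tendsto.congr' ?_ (by simpa using hslope.mul hsqrt)
  filter_upwards [self_mem_nhdsWithin] with x hx
  have hs : √x ≠ 0 := (sqrt_pos.mpr hx).ne'
  have hx0 : x ≠ 0 := ne_of_gt hx
  rw [slope_def_field, sub_zero]
  field_simp
  rw [sq_sqrt (le_of_lt hx)]

theorem eqOn_zero_of_hasDerivAt_of_tendsto_div_sqrt {D : ℝ → ℝ} {b : ℝ}
    (hD : ∀ x ∈ Ioo 0 b, HasDerivAt D ((1 - 2 * x) * D x / (2 * x * (1 + x))) x)
    (hlim : Tendsto (fun x => D x / √x) (𝓝[>] 0) (𝓝 0)) : EqOn D 0 (Ioo 0 b) := by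
  set E := fun x => D x ^ 2 * (1 + x) ^ 3 / x
  have hE : ∀ x ∈ Ioo 0 b, HasDerivAt E 0 x := by
    intro x hx
    have hx0 : x ≠ 0 := hx.1.ne'
    have h1x : 1 + x ≠ 0 := by linarith [hx.1]
    refine ((((hD x hx).pow 2).mul (((hasDerivAt_id x).const_add 1).pow 3)).div
      (hasDerivAt_id x) hx0).congr_deriv ?_
    simp only [id, Pi.pow_apply, Pi.mul_apply]
    field_simp
    ring
  obtain ⟨e, he⟩ := isOpen_Ioo.exists_is_const_of_deriv_eq_zero isPreconnected_Ioo
    (fun x hx => (hE x hx).differentiableAt.differentiableWithinAt) (fun x hx => (hE x hx).deriv)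
  have hE0 : Tendsto E (𝓝[>] 0) (𝓝 0) := by
    have hcube : Tendsto (fun x : ℝ => (1 + x) ^ 3) (𝓝[>] 0) (𝓝 1) :=
      ((by fun_prop : Continuous fun x : ℝ => (1 + x) ^ 3).tendsto' 0 1 (by norm_num)).mono_left
        nhdsWithin_le_nhds
    refine Tendsto.congr' ?_ (by simpa using (hlim.pow 2).mul hcube)
    filter_upwards [self_mem_nhdsWithin] with x hx
    rw [div_pow, sq_sqrt (le_of_lt hx)]
    ring
  intro x hx
  have hb : 0 < b := hx.1.trans hx.2
  have hEe : Tendsto E (𝓝[>] 0) (𝓝 e) :=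
    tendsto_const_nhds.congr' (eventuallyEq_of_mem (Ioo_mem_nhdsGT hb) fun y hy => (he y hy).symm)
  have he0 : e = 0 := tendsto_nhds_unique hEe hE0
  have hEx : D x ^ 2 * (1 + x) ^ 3 / x = 0 := he0 ▸ he x hx
  have h1x : (1 + x) ^ 3 ≠ 0 := by have := hx.1; positivity
  simpa [hx.1.ne', h1x] using hEx

noncomputable def sprugnoliCoeff (n : ℕ) : ℝ := (n.centralBinom : ℝ)⁻¹ * (-1) ^ n * 4 ^ n

noncomputable def sprugnoliSeries (z : ℝ) : ℝ := ∑' n, sprugnoliCoeff n * z ^ n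

theorem sprugnoliCoeff_zero : sprugnoliCoeff 0 = 1 := by simp [sprugnoliCoeff]

theorem abs_sprugnoliCoeff_le (n : ℕ) : |sprugnoliCoeff n| ≤ 2 * (n + 1) := by
  have hpos : (0 : ℝ) < n.centralBinom := by exact_mod_cast n.centralBinom_pos
  have h4 : (4 : ℝ) ^ n ≤ (2 * n + 1) * n.centralBinom := by
    exact_mod_cast Nat.four_pow_le_two_mul_add_one_mul_central_binom n
  rw [sprugnoliCoeff, abs_mul, abs_mul, abs_pow, abs_neg, abs_one, one_pow, mul_one,
    abs_inv, abs_of_pos hpos, abs_of_pos (by positivity), inv_mul_le_iff₀ hpos]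
  nlinarith

theorem sprugnoliCoeff_succ (n : ℕ) :
    (2 * n + 1) * sprugnoliCoeff (n + 1) = -(2 * n + 2) * sprugnoliCoeff n := by
  have h : ((n : ℝ) + 1) * (n + 1).centralBinom = 2 * (2 * n + 1) * n.centralBinom := by
    exact_mod_cast Nat.succ_mul_centralBinom_succ n
  have h0 : (n.centralBinom : ℝ) ≠ 0 := by exact_mod_cast n.centralBinom_ne_zero
  have h1 : ((n + 1).centralBinom : ℝ) ≠ 0 := by exact_mod_cast (n + 1).centralBinom_ne_zero
  simp only [sprugnoliCoeff, pow_succ]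
  field_simp
  linear_combination 2 * h

theorem sprugnoliSeries_zero : sprugnoliSeries 0 = 1 := by
  rw [sprugnoliSeries, tsum_eq_single 0 fun n hn => by simp [hn]]
  simp [sprugnoliCoeff_zero]

theorem sprugnoliSeries_ode {x : ℝ} (hx : |x| < 1) :
    2 * x * (1 + x) * ∑' n, (n + 1) * sprugnoliCoeff (n + 1) * x ^ n
      = (1 - 2 * x) * sprugnoliSeries x - 1 := by
  have hS : HasSum (fun n => sprugnoliCoeff n * x ^ n) (sprugnoliSeries x) :=
    (summable_mul_pow_of_abs_le abs_sprugnoliCoeff_le hx).hasSum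
  have hd := (summable_deriv_coeff_mul_pow_of_abs_le abs_sprugnoliCoeff_le hx).hasSum
  set c := sprugnoliCoeff
  set d := ∑' n, (n + 1) * c (n + 1) * x ^ n
  have hS₁ : HasSum (fun n => c (n + 1) * x ^ (n + 1)) (sprugnoliSeries x - 1) := by
    simpa [c, sprugnoliCoeff_zero] using (hasSum_nat_add_iff' 1).mpr hS
  have hxd : HasSum (fun n => n * c n * x ^ n) (x * d) := by
    refine (hasSum_nat_add_iff' 1).mp ?_
    simp only [Finset.range_one, Finset.sum_singleton, Nat.cast_zero, zero_mul, sub_zero,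
      Nat.cast_add_one]
    have h_eq : (fun n => (n + 1) * c (n + 1) * x ^ (n + 1))
        = fun n => x * ((n + 1) * c (n + 1) * x ^ n) := by
      funext n; ring
    rw [h_eq]
    exact hd.mul_left x
  have h_rec : (fun n => 2 * x * ((n + 1) * c (n + 1) * x ^ n))
      = fun n => c (n + 1) * x ^ (n + 1) - 2 * x * (n * c n * x ^ n) - 2 * x * (c n * x ^ n) := by
    funext n
    linear_combination x ^ (n + 1) * sprugnoliCoeff_succ n
  have h := hd.mul_left (2 * x)
  rw [h_rec] at h
  have := h.unique ((hS₁.sub (hxd.mul_left (2 * x))).sub (hS.mul_left (2 * x)))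
  linear_combination this

theorem hasDerivAt_sprugnoliSeries {x : ℝ} (hx : |x| < 1) (hx0 : x ≠ 0) :
    HasDerivAt sprugnoliSeries (((1 - 2 * x) * sprugnoliSeries x - 1) / (2 * x * (1 + x))) x := by
  have h1x : 1 + x ≠ 0 := by linarith [neg_abs_le x]
  refine (hasDerivAt_tsum_mul_pow abs_sprugnoliCoeff_le hx).congr_deriv ?_
  rw [← sprugnoliSeries_ode hx]
  field_simp

noncomputable def sprugnoliKernel (s : ℝ) : ℝ := 1 + 1 / 2 * s * log ((1 - s) / (1 + s))

noncomputable def sprugnoliClosedForm (z : ℝ) : ℝ := 1 / (1 + z) * sprugnoliKernel √(z / (1 + z))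

theorem hasDerivAt_sprugnoliKernel {s : ℝ} (hs : |s| < 1) :
    HasDerivAt sprugnoliKernel (1 / 2 * log ((1 - s) / (1 + s)) - s / (1 - s ^ 2)) s := by
  obtain ⟨hs₁, hs₂⟩ := abs_lt.mp hs
  have h1 : 1 - s ≠ 0 := by linarith
  have h2 : 1 + s ≠ 0 := by linarith
  have hq := ((hasDerivAt_id s).const_sub 1).fun_div ((hasDerivAt_id s).const_add 1) h2
  have hL := hq.log (div_ne_zero h1 h2)
  refine ((((hasDerivAt_id s).const_mul (1 / 2)).fun_mul hL).const_add 1).congr_deriv ?_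
  have h3 : 1 - s ^ 2 ≠ 0 := by nlinarith
  simp only [id]
  field_simp
  ring

theorem hasDerivAt_sprugnoliClosedForm {x : ℝ} (hx : 0 < x) :
    HasDerivAt sprugnoliClosedForm
      (((1 - 2 * x) * sprugnoliClosedForm x - 1) / (2 * x * (1 + x))) x := by
  have h1x : 0 < 1 + x := by linarith
  have ht0 : 0 < x / (1 + x) := by positivity
  have hs0 : 0 < √(x / (1 + x)) := Real.sqrt_pos.mpr ht0
  have hs1 : √(x / (1 + x)) < 1 := by
    rw [Real.sqrt_lt' one_pos, one_pow, div_lt_one h1x]; linarith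
  have hs := ((hasDerivAt_id x).fun_div ((hasDerivAt_id x).const_add 1) h1x.ne').sqrt ht0.ne'
  have hk := (hasDerivAt_sprugnoliKernel (abs_lt.mpr ⟨by linarith, hs1⟩)).comp x hs
  have hinv := (hasDerivAt_const x (1:ℝ)).fun_div ((hasDerivAt_id x).const_add 1) h1x.ne'
  refine (hinv.fun_mul hk).congr_deriv ?_
  have hs2 : √(x / (1 + x)) ^ 2 = x / (1 + x) := Real.sq_sqrt ht0.le
  simp only [sprugnoliClosedForm, sprugnoliKernel, Function.comp_apply, id]
  generalize √(x / (1 + x)) = s at *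
  generalize log ((1 - s) / (1 + s)) = L
  have h3 : 1 - s ^ 2 ≠ 0 := by nlinarith
  have hx' : x = s ^ 2 / (1 - s ^ 2) := by
    rw [eq_div_iff h3, hs2]; field_simp; ring
  rw [hx']
  field_simp
  ring

theorem tendsto_sprugnoliClosedForm_sub_div_sqrt :
    Tendsto (fun x => (sprugnoliClosedForm x - 1) / √x) (𝓝[>] 0) (𝓝 0) := by
  -- `g x = (sprugnoliClosedForm x - 1) / √x` for `x > 0`, and `g` is continuous at `0`
  set g : ℝ → ℝ := fun x =>
    (1 / 2 * log ((1 - √(x / (1 + x))) / (1 + √(x / (1 + x)))) / √(1 + x) - √x) / (1 + x)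
  have hg : ContinuousAt g 0 := by fun_prop (disch := norm_num)
  have hg0 : g 0 = 0 := by simp [g]
  refine Tendsto.congr' ?_ (hg0 ▸ hg.tendsto.mono_left nhdsWithin_le_nhds)
  filter_upwards [self_mem_nhdsWithin] with x hx
  have hx0 : 0 < x := hx
  have hs : √x ≠ 0 := (sqrt_pos.mpr hx0).ne'
  have hs1 : √(1 + x) ≠ 0 := (sqrt_pos.mpr (by linarith)).ne'
  have h1x : 1 + x ≠ 0 := by linarith
  simp only [g, sprugnoliClosedForm, sprugnoliKernel, sqrt_div hx0.le]
  field_simp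
  linear_combination (-2 * √(1 + x)) * mul_self_sqrt hx0.le

theorem sprugnoliSeries_eq_closedForm {z : ℝ} (hz0 : 0 ≤ z) (hz1 : z < 1) :
    sprugnoliSeries z = sprugnoliClosedForm z := by
  rcases hz0.eq_or_lt with rfl | hz0
  · simp [sprugnoliSeries_zero, sprugnoliClosedForm, sprugnoliKernel]
  have hD : ∀ x ∈ Ioo 0 1, HasDerivAt (fun y => sprugnoliSeries y - sprugnoliClosedForm y)
      ((1 - 2 * x) * (sprugnoliSeries x - sprugnoliClosedForm x) / (2 * x * (1 + x))) x := by
    intro x hx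
    refine ((hasDerivAt_sprugnoliSeries (abs_lt.mpr ⟨by linarith [hx.1], hx.2⟩) hx.1.ne').sub
      (hasDerivAt_sprugnoliClosedForm hx.1)).congr_deriv ?_
    ring
  have hlim :
      Tendsto (fun x => (sprugnoliSeries x - sprugnoliClosedForm x) / √x) (𝓝[>] 0) (𝓝 0) := by
    have hS := tendsto_sub_div_sqrt_of_hasDerivAt
      (hasDerivAt_tsum_mul_pow abs_sprugnoliCoeff_le (x := 0) (by norm_num))
    rw [← sprugnoliSeries, sprugnoliSeries_zero] at hS
    have h := hS.sub tendsto_sprugnoliClosedForm_sub_div_sqrt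
    rw [sub_zero] at h
    refine h.congr fun x => ?_
    rw [sprugnoliSeries]
    ring
  exact sub_eq_zero.mp (eqOn_zero_of_hasDerivAt_of_tendsto_div_sqrt hD hlim ⟨hz0, hz1⟩)

theorem stmt8 (z t : ℝ) (hz0 : 0 ≤ z) (hz1 : z < 1) (ht : t = z / (1 + z)) :
    HasSum (fun n : ℕ => ((Nat.centralBinom n : ℝ))⁻¹ * (-1) ^ n * 4 ^ n * z ^ n)
      ((1 / (1 + z)) *
        (1 + (1 / 2) * Real.sqrt t * Real.log ((1 - Real.sqrt t) / (1 + Real.sqrt t)))) := by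
  subst ht
  have h : HasSum (fun n => sprugnoliCoeff n * z ^ n) (sprugnoliSeries z) :=
    (summable_mul_pow_of_abs_le abs_sprugnoliCoeff_le (abs_lt.mpr ⟨by linarith, hz1⟩)).hasSum
  rwa [sprugnoliSeries_eq_closedForm hz0 hz1] at h
end

section
/- For every real z with 0 ≤ z < 1, the series ∑_{n=0}^∞ (binom(2n,n))⁻¹ · 4^n · z^n converges and equals (1/(1−z)) · ( 1 + √(z/(1−z)) · arctan(√(z/(1−z))) ). -/
/-!
By the Beta integral, `4 ^ n / centralBinom n = (2 n + 1) ∫₀¹ (4 t (1 - t)) ^ n dt`. Summing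
`∑ (2 n + 1) u ^ n = (1 + u) / (1 - u) ^ 2` under the integral (dominated convergence, since
`0 ≤ 4 z t (1 - t) ≤ z < 1`) turns the series into the integral of a rational function of `t`,
which is elementary because `1 - 4 z t (1 - t) = (1 - z) (1 + (w (2 t - 1)) ^ 2)` for
`w = √(z / (1 - z))`; the arctangent comes from this factorization.
-/

open Real intervalIntegral Nat

theorem integral_pow_mul_one_sub_pow (n m : ℕ) :
    ∫ x in (0 : ℝ)..1, x ^ n * (1 - x) ^ m = (n ! * m ! : ℝ) / (n + m + 1)! := by
  induction m generalizing n with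
  | zero =>
    simp only [pow_zero, mul_one, integral_pow, one_pow, zero_pow (succ_ne_zero _), sub_zero,
      factorial_zero, add_zero, factorial_succ]
    push_cast
    field_simp
  | succ m ih =>
    have hu : ∀ x ∈ Set.uIcc (0 : ℝ) 1,
        HasDerivAt (fun x : ℝ => (1 - x) ^ (m + 1)) (-((m + 1) * (1 - x) ^ m)) x := fun x _ => by
      simpa using ((hasDerivAt_id x).const_sub 1).fun_pow (m + 1)
    have hv : ∀ x ∈ Set.uIcc (0 : ℝ) 1,
        HasDerivAt (fun x : ℝ => x ^ (n + 1) / (n + 1)) (x ^ n) x := fun x _ =>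
      ((hasDerivAt_pow (n + 1) x).div_const ((n : ℝ) + 1)).congr_deriv
        (by rw [Nat.add_sub_cancel]; push_cast; field_simp)
    have ibp := integral_mul_deriv_eq_deriv_mul hu hv
      ((by fun_prop : Continuous fun x : ℝ => -((m + 1) * (1 - x) ^ m)).intervalIntegrable 0 1)
      ((continuous_pow n).intervalIntegrable 0 1)
    calc ∫ x in (0 : ℝ)..1, x ^ n * (1 - x) ^ (m + 1)
        = ∫ x in (0 : ℝ)..1, (1 - x) ^ (m + 1) * x ^ n := by simp only [mul_comm]
      _ = (m + 1) / (n + 1) * ∫ x in (0 : ℝ)..1, x ^ (n + 1) * (1 - x) ^ m := by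
        rw [ibp, ← integral_const_mul]
        simp only [sub_self, sub_zero, one_pow, zero_pow (succ_ne_zero _), zero_mul, zero_div,
          mul_zero, zero_sub, ← integral_neg]
        congr 1; funext x; ring
      _ = _ := by
        rw [ih, show n + 1 + m + 1 = n + (m + 1) + 1 by omega]
        simp only [Nat.factorial_succ]
        push_cast
        field_simp

theorem hasSum_two_mul_add_one_mul_geometric {𝕜 : Type*} [NormedField 𝕜] [CompleteSpace 𝕜]
    {u : 𝕜} (hu : ‖u‖ < 1) :
    HasSum (fun n : ℕ => (2 * n + 1) * u ^ n) ((1 + u) / (1 - u) ^ 2) := by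
  have hu1 : 1 - u ≠ 0 := sub_ne_zero.2 (by rintro rfl; simp at hu)
  have h := ((hasSum_coe_mul_geometric_of_norm_lt_one hu).mul_left 2).add
    (hasSum_geometric_of_norm_lt_one hu)
  rw [show (1 + u) / (1 - u) ^ 2 = 2 * (u / (1 - u) ^ 2) + (1 - u)⁻¹ by field_simp; ring]
  exact h.congr_fun fun n => by ring

theorem integral_mul_one_sub_pow (n : ℕ) :
    ∫ t in (0 : ℝ)..1, (t * (1 - t)) ^ n = ((2 * n + 1) * centralBinom n : ℝ)⁻¹ := by
  simp_rw [mul_pow, integral_pow_mul_one_sub_pow, centralBinom_eq_two_mul_choose,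
    Nat.cast_choose ℝ (show n ≤ 2 * n by omega), show 2 * n - n = n by omega,
    show n + n + 1 = 2 * n + 1 by omega, Nat.factorial_succ]
  push_cast
  field_simp

theorem integral_two_mul_add_one_mul_pow (z : ℝ) (n : ℕ) :
    ∫ t in (0 : ℝ)..1, (2 * n + 1) * (4 * z * (t * (1 - t))) ^ n
      = (centralBinom n : ℝ)⁻¹ * 4 ^ n * z ^ n := by
  simp_rw [mul_pow (4 * z), integral_const_mul, integral_mul_one_sub_pow]
  have : (0 : ℝ) < 2 * n + 1 := by positivity
  field_simp
  ring

theorem one_sub_four_mul_eq {z w : ℝ} (hw : w ^ 2 * (1 - z) = z) (t : ℝ) :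
    1 - 4 * z * (t * (1 - t)) = (1 - z) * (1 + (w * (2 * t - 1)) ^ 2) := by
  linear_combination (-(2 * t - 1) ^ 2) * hw

theorem one_sub_four_mul_pos {z w : ℝ} (hz : z < 1) (hw : w ^ 2 * (1 - z) = z) (t : ℝ) :
    0 < 1 - 4 * z * (t * (1 - t)) := by
  rw [one_sub_four_mul_eq hw]
  have := sub_pos.2 hz
  positivity

theorem hasDerivAt_primitive_one_add_div_one_sub_sq {z w : ℝ} (hz : z < 1)
    (hw : w ^ 2 * (1 - z) = z) (t : ℝ) :
    HasDerivAt
      (fun t => ((2 * t - 1) / (1 - 4 * z * (t * (1 - t))) + w * arctan (w * (2 * t - 1)))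
        / (2 * (1 - z)))
      ((1 + 4 * z * (t * (1 - t))) / (1 - 4 * z * (t * (1 - t))) ^ 2) t := by
  have hq := one_sub_four_mul_pos hz hw t
  have hs : HasDerivAt (fun t : ℝ => 2 * t - 1) 2 t := by
    simpa using ((hasDerivAt_id t).const_mul 2).sub_const 1
  have hq' : HasDerivAt (fun t : ℝ => 1 - 4 * z * (t * (1 - t))) (-(4 * z * (1 - 2 * t))) t := by
    have := (((hasDerivAt_id t).mul ((hasDerivAt_id t).const_sub 1)).const_mul (4 * z)).const_sub 1
    exact this.congr_deriv (by simp only [id]; ring)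
  have h := ((hs.div hq' hq.ne').add ((hs.const_mul w).arctan.const_mul w)).div_const
    (2 * (1 - z))
  refine h.congr_deriv ?_
  rw [one_sub_four_mul_eq hw] at hq ⊢
  have : 1 - z ≠ 0 := (sub_pos.2 hz).ne'
  field_simp
  linear_combination
    (2 * (1 - z) * (1 + w ^ 2 * (2 * t - 1) ^ 2) + 2 * (1 + z) * (2 * t - 1) ^ 2) * hw

theorem integral_one_add_div_one_sub_sq {z w : ℝ} (hz : z < 1) (hw : w ^ 2 * (1 - z) = z) :
    ∫ t in (0 : ℝ)..1, (1 + 4 * z * (t * (1 - t))) / (1 - 4 * z * (t * (1 - t))) ^ 2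
      = (1 + w * arctan w) / (1 - z) := by
  have hcont : Continuous fun t : ℝ =>
      (1 + 4 * z * (t * (1 - t))) / (1 - 4 * z * (t * (1 - t))) ^ 2 := by
    fun_prop (disch := exact fun t => (pow_pos (one_sub_four_mul_pos hz hw t) 2).ne')
  rw [integral_eq_sub_of_hasDerivAt
    (fun t _ => hasDerivAt_primitive_one_add_div_one_sub_sq hz hw t) (hcont.intervalIntegrable 0 1)]
  have : 1 - z ≠ 0 := (sub_pos.2 hz).ne'
  norm_num [arctan_neg]
  field_simp
  ring

theorem hasSum_integral_two_mul_add_one_mul_pow {z : ℝ} (hz0 : 0 ≤ z) (hz1 : z < 1) :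
    HasSum (fun n : ℕ => ∫ t in (0 : ℝ)..1, (2 * n + 1) * (4 * z * (t * (1 - t))) ^ n)
      (∫ t in (0 : ℝ)..1, (1 + 4 * z * (t * (1 - t))) / (1 - 4 * z * (t * (1 - t))) ^ 2) := by
  have hq : ∀ t ∈ Set.uIoc (0 : ℝ) 1, 0 ≤ 4 * z * (t * (1 - t)) ∧ 4 * z * (t * (1 - t)) ≤ z := by
    intro t ht
    rw [Set.uIoc_of_le zero_le_one] at ht
    have : 0 ≤ t * (1 - t) := mul_nonneg ht.1.le (sub_nonneg.2 ht.2)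
    exact ⟨by positivity, by nlinarith [sq_nonneg (2 * t - 1)]⟩
  refine hasSum_integral_of_dominated_convergence (fun n _ => (2 * n + 1) * z ^ n)
    (fun n => (by fun_prop : Continuous _).aestronglyMeasurable)
    (fun n => MeasureTheory.ae_of_all _ fun t ht => ?_)
    (MeasureTheory.ae_of_all _ fun _ _ => (hasSum_two_mul_add_one_mul_geometric ?_).summable)
    intervalIntegrable_const
    (MeasureTheory.ae_of_all _ fun t ht => hasSum_two_mul_add_one_mul_geometric ?_)
  · obtain ⟨h0, h1⟩ := hq t ht
    rw [Real.norm_of_nonneg (by positivity)]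
    gcongr
  · rwa [Real.norm_of_nonneg hz0]
  · obtain ⟨h0, h1⟩ := hq t ht
    rw [Real.norm_of_nonneg h0]
    exact h1.trans_lt hz1

theorem stmt9 (z : ℝ) (hz0 : 0 ≤ z) (hz1 : z < 1) :
    HasSum (fun n : ℕ => ((Nat.centralBinom n : ℝ))⁻¹ * 4 ^ n * z ^ n)
      ((1 / (1 - z)) *
        (1 + Real.sqrt (z / (1 - z)) * Real.arctan (Real.sqrt (z / (1 - z))))) := by
  have hw : sqrt (z / (1 - z)) ^ 2 * (1 - z) = z := by
    rw [sq_sqrt (div_nonneg hz0 (sub_nonneg.2 hz1.le))]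
    field_simp [(sub_pos.2 hz1).ne']
  have h := hasSum_integral_two_mul_add_one_mul_pow hz0 hz1
  simp_rw [integral_two_mul_add_one_mul_pow, integral_one_add_div_one_sub_sq hz1 hw] at h
  rwa [one_div_mul_eq_div]
end

section
/- For every real t with 0 < t < 1, (1/2) · ∫_{−t}^{t} log(1+x)/(1−x) dx = log(√2) · log((1+t)/(1−t)) − (1/2)·( Li₂((1+t)/2) − Li₂((1−t)/2) ). -/
/-!
Since `Li₂'(u) = -log (1 - u) / u` for `0 < |u| < 1` (differentiate the power series termwise) and
`1 - (1 - x) / 2 = (1 + x) / 2`, the function `Li₂ ((1 - x) / 2) - log 2 · log (1 - x)` is an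
antiderivative of `log (1 + x) / (1 - x)` on `(-1, 1)`.
-/

open Real MeasureTheory

open Set

lemma hasDerivAt_Li2_tsum {u : ℝ} (hu : |u| < 1) :
    HasDerivAt Li2 (∑' n : ℕ, u ^ n / (n + 1)) u := by
  set r : ℝ := (1 + |u|) / 2 with hr
  have hr1 : r < 1 := by rw [hr]; linarith
  have hr0 : 0 < r := by positivity
  have hur : u ∈ Ioo (-r) r := abs_lt.mp (by rw [hr]; linarith)
  refine hasDerivAt_tsum_of_isPreconnected (y₀ := 0)
    (g := fun (n : ℕ) (z : ℝ) => z ^ (n + 1) / (n + 1) ^ 2) (g' := fun n z => z ^ n / (n + 1))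
    (summable_geometric_of_lt_one (by positivity) hr1) isOpen_Ioo (convex_Ioo _ _).isPreconnected
    (fun n y _ => ?_) (fun n y hy => ?_) ⟨by linarith, hr0⟩
    (summable_zero.congr fun n => by simp) hur
  · have hn : ((n : ℝ) + 1) ≠ 0 := by positivity
    refine ((hasDerivAt_pow (n + 1) y).div_const _).congr_deriv ?_
    push_cast
    field_simp
  · have hy : |y| ≤ r := (abs_lt.mpr hy).le
    calc ‖y ^ n / ((n : ℝ) + 1)‖ = |y| ^ n / (n + 1) := by
          rw [Real.norm_eq_abs, abs_div, abs_pow, abs_of_pos (a := (n : ℝ) + 1) n.cast_add_one_pos]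
      _ ≤ |y| ^ n := div_le_self (by positivity) (by linarith [n.cast_nonneg (α := ℝ)])
      _ ≤ r ^ n := pow_le_pow_left₀ (abs_nonneg y) hy n

lemma hasSum_pow_div_succ {u : ℝ} (hu0 : u ≠ 0) (hu : |u| < 1) :
    HasSum (fun n : ℕ => u ^ n / (n + 1)) (-log (1 - u) / u) := by
  have hshift (n : ℕ) : u ^ (n + 1) / (n + 1) / u = u ^ n / (n + 1) := by
    rw [pow_succ]
    field_simp
  simpa only [hshift] using (hasSum_pow_div_log_of_abs_lt_one hu).div_const u

lemma hasDerivAt_Li2_s12 {u : ℝ} (hu0 : u ≠ 0) (hu : |u| < 1) :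
    HasDerivAt Li2 (-log (1 - u) / u) u :=
  (hasSum_pow_div_succ hu0 hu).tsum_eq ▸ hasDerivAt_Li2_tsum hu

lemma hasDerivAt_Li2_half_one_sub_sub_log {x : ℝ} (hx : x ∈ Ioo (-1) 1) :
    HasDerivAt (fun y => Li2 ((1 - y) / 2) - log 2 * log (1 - y))
      (log (1 + x) / (1 - x)) x := by
  obtain ⟨hx1, hx2⟩ := hx
  have hu0 : (1 - x) / 2 ≠ 0 := by linarith
  have hu1 : |(1 - x) / 2| < 1 := abs_lt.mpr ⟨by linarith, by linarith⟩
  have hinner : HasDerivAt (fun y : ℝ => (1 - y) / 2) (-1 / 2) x := by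
    simpa using ((hasDerivAt_id x).const_sub 1).div_const 2
  have hlog : HasDerivAt (fun y : ℝ => log (1 - y)) (-1 / (1 - x)) x := by
    simpa [div_eq_inv_mul] using ((hasDerivAt_id' x).const_sub 1).log (by linarith)
  refine (((hasDerivAt_Li2_s12 hu0 hu1).comp x hinner).sub (hlog.const_mul (log 2))).congr_deriv ?_
  have hsub : 1 - (1 - x) / 2 = (1 + x) / 2 := by ring
  have h1x : 1 - x ≠ 0 := by linarith
  rw [hsub, log_div (by linarith) two_ne_zero]
  field_simp
  ring

lemma integral_log_one_add_div_one_sub {a b : ℝ} (ha : a ∈ Ioo (-1) 1) (hb : b ∈ Ioo (-1) 1) :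
    ∫ x in a..b, log (1 + x) / (1 - x) =
      (Li2 ((1 - b) / 2) - log 2 * log (1 - b)) - (Li2 ((1 - a) / 2) - log 2 * log (1 - a)) := by
  have hsub : uIcc a b ⊆ Ioo (-1) 1 := ordConnected_Ioo.uIcc_subset ha hb
  refine intervalIntegral.integral_eq_sub_of_hasDerivAt
    (fun x hx => hasDerivAt_Li2_half_one_sub_sub_log (hsub hx)) (ContinuousOn.intervalIntegrable ?_)
  refine ContinuousOn.div (ContinuousOn.log (by fun_prop) fun x hx => ?_) (by fun_prop)
    fun x hx => ?_
  · linarith [(hsub hx).1]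
  · linarith [(hsub hx).2]

theorem stmt12 (t : ℝ) (ht0 : 0 < t) (ht1 : t < 1) :
    (1 / 2) * ∫ x in (-t)..t, Real.log (1 + x) / (1 - x) =
      Real.log (Real.sqrt 2) * Real.log ((1 + t) / (1 - t)) -
        (1 / 2) * (Li2 ((1 + t) / 2) - Li2 ((1 - t) / 2)) := by
  rw [integral_log_one_add_div_one_sub ⟨by linarith, by linarith⟩ ⟨by linarith, ht1⟩,
    sub_neg_eq_add, log_sqrt zero_le_two, log_div (by linarith) (by linarith)]
  ring
end
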